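/- Let Q be a finite acyclic quiver, X an exceptional representation of Q (i.e. End(X) = k and Ext¹(X,X) = 0), and a a natural number. If W is a subrepresentation of X^a with dimension vector equal to that of X, then W is isomorphic to X. -/

import Mathlib

/-- A representation of the quiver with vertices `V`, arrows `A`, source and target
maps `s`, `t`. -/
structure QRep (k : Type) [Field k] (V A : Type) (s t : A → V) where
  space : V → Type
  [addCommGroup : ∀ v, AddCommGroup (space v)]
  [module : ∀ v, Module k (space v)]
  map : ∀ a : A, space (s a) →ₗ[k] space (t a)

attribute [instance] QRep.addCommGroup QRep.module

/-- The quiver has no (directed) cycles. -/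
def NoCycle {V A : Type} (s t : A → V) : Prop :=
  ∀ (m : ℕ) (c : Fin (m + 1) → A),
    (∀ i : Fin m, t (c i.castSucc) = s (c i.succ)) → t (c (Fin.last m)) ≠ s (c 0)

/-- `f` is a morphism of representations `X → Y`. -/
def IsQHom (k : Type) [Field k] {V A : Type} {s t : A → V} (X Y : QRep k V A s t)
    (f : ∀ v, X.space v →ₗ[k] Y.space v) : Prop :=
  ∀ a : A, (f (t a)).comp (X.map a) = (Y.map a).comp (f (s a))

/-- The direct sum of `n` copies of a representation. -/
def QRep.pow (k : Type) [Field k] {V A : Type} {s t : A → V} (X : QRep k V A s t)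
    (n : ℕ) : QRep k V A s t where
  space v := Fin n → X.space v
  addCommGroup := fun _ => inferInstance
  module := fun _ => inferInstance
  map a := LinearMap.pi fun j => (X.map a).comp (LinearMap.proj j)

/-!
The representation `W ≤ X^n` has the dimension vector of `X`, and for a quiver the Euler form
`dim Hom(X, Y) - dim Ext¹(X, Y)` depends only on dimension vectors: it is the dimension of the
kernel minus that of the cokernel of the map `ringelMap X Y` between spaces whose dimensions
are read off the dimension vectors. Since `Ext¹(X, X) = 0`, this gives
`dim Hom(X, W) ≥ dim Hom(X, X) > 0`. A nonzero `f : X → W`, followed by the inclusion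
`W ≤ X^n` and a suitable projection, is a nonzero endomorphism of the brick `X`, hence an
isomorphism; so every `f v` is injective, and bijective by the dimension count.
-/

namespace QRep

variable {k : Type} [Field k] {V A : Type} {s t : A → V}

def sub (Y : QRep k V A s t) (W : ∀ v, Submodule k (Y.space v))
    (hW : ∀ a, ∀ x ∈ W (s a), Y.map a x ∈ W (t a)) : QRep k V A s t where
  space v := W v
  addCommGroup := fun _ => inferInstance
  module := fun _ => inferInstance
  map a := (Y.map a).restrict (hW a)

/-- The map `⊕ᵥ Hom(Xᵥ, Yᵥ) → ⊕ₐ Hom(X_{s a}, Y_{t a})` whose kernel is `Hom(X, Y)` and whose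
cokernel is `Ext¹(X, Y)`. -/
def ringelMap (X Y : QRep k V A s t) :
    (∀ v, X.space v →ₗ[k] Y.space v) →ₗ[k] (∀ a, X.space (s a) →ₗ[k] Y.space (t a)) where
  toFun f a := (f (t a)).comp (X.map a) - (Y.map a).comp (f (s a))
  map_add' f g := by
    funext a
    simp only [Pi.add_apply, LinearMap.add_comp, LinearMap.comp_add]
    abel
  map_smul' c f := by
    funext a
    simp only [Pi.smul_apply, LinearMap.smul_comp, LinearMap.comp_smul, smul_sub,
      RingHom.id_apply]

theorem mem_ker_ringelMap_iff {X Y : QRep k V A s t} {f : ∀ v, X.space v →ₗ[k] Y.space v} :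
    f ∈ LinearMap.ker (ringelMap X Y) ↔ IsQHom k X Y f := by
  simp only [LinearMap.mem_ker, funext_iff, Pi.zero_apply, IsQHom]
  exact forall_congr' fun a => sub_eq_zero

theorem _root_.IsQHom.comp {X Y Z : QRep k V A s t} {g : ∀ v, Y.space v →ₗ[k] Z.space v}
    {f : ∀ v, X.space v →ₗ[k] Y.space v} (hg : IsQHom k Y Z g) (hf : IsQHom k X Y f) :
    IsQHom k X Z fun v => (g v).comp (f v) := by
  intro a
  rw [LinearMap.comp_assoc, hf a, ← LinearMap.comp_assoc, hg a, LinearMap.comp_assoc]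

theorem isQHom_subtype (Y : QRep k V A s t) (W : ∀ v, Submodule k (Y.space v))
    (hW : ∀ a, ∀ x ∈ W (s a), Y.map a x ∈ W (t a)) :
    IsQHom k (Y.sub W hW) Y fun v => (W v).subtype :=
  fun _ => rfl

theorem isQHom_proj (X : QRep k V A s t) {n : ℕ} (j : Fin n) :
    IsQHom k (X.pow k n) X fun _ => LinearMap.proj j :=
  fun _ => rfl

theorem _root_.IsQHom.symm_apply_map {X Y : QRep k V A s t} {e : ∀ v, X.space v ≃ₗ[k] Y.space v}
    (he : IsQHom k X Y fun v => (e v).toLinearMap) (a : A) (y : Y.space (s a)) :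
    (e (t a)).symm (Y.map a y) = X.map a ((e (s a)).symm y) := by
  rw [LinearEquiv.symm_apply_eq]
  simpa using (LinearMap.congr_fun (he a) ((e (s a)).symm y)).symm

theorem finrank_ker_ringelMap_le [Fintype V] [Fintype A] {X Y Y' : QRep k V A s t}
    [∀ v, FiniteDimensional k (X.space v)] [∀ v, FiniteDimensional k (Y.space v)]
    [∀ v, FiniteDimensional k (Y'.space v)]
    (hsurj : Function.Surjective (ringelMap X Y))
    (hdim : ∀ v, Module.finrank k (Y'.space v) = Module.finrank k (Y.space v)) :
    Module.finrank k (LinearMap.ker (ringelMap X Y)) ≤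
      Module.finrank k (LinearMap.ker (ringelMap X Y')) := by
  have hdom : Module.finrank k (∀ v, X.space v →ₗ[k] Y'.space v) =
      Module.finrank k (∀ v, X.space v →ₗ[k] Y.space v) := by
    simp only [Module.finrank_pi_fintype, Module.finrank_linearMap, hdim]
  have hcod : Module.finrank k (∀ a, X.space (s a) →ₗ[k] Y'.space (t a)) =
      Module.finrank k (∀ a, X.space (s a) →ₗ[k] Y.space (t a)) := by
    simp only [Module.finrank_pi_fintype, Module.finrank_linearMap, hdim]
  have hrange : Module.finrank k (LinearMap.range (ringelMap X Y)) =
      Module.finrank k (∀ a, X.space (s a) →ₗ[k] Y.space (t a)) := by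
    rw [LinearMap.range_eq_top.mpr hsurj, finrank_top]
  have hrange' := Submodule.finrank_le (LinearMap.range (ringelMap X Y'))
  have := LinearMap.finrank_range_add_finrank_ker (ringelMap X Y)
  have := LinearMap.finrank_range_add_finrank_ker (ringelMap X Y')
  omega

theorem exists_isQHom_ne_zero [Fintype V] [Fintype A] {X Y : QRep k V A s t}
    [∀ v, FiniteDimensional k (X.space v)] [∀ v, FiniteDimensional k (Y.space v)]
    (hsurj : Function.Surjective (ringelMap X X))
    (hdim : ∀ v, Module.finrank k (Y.space v) = Module.finrank k (X.space v))
    {v₀ : V} (hv₀ : Nontrivial (X.space v₀)) :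
    ∃ f, IsQHom k X Y f ∧ f ≠ 0 := by
  have hid : (fun _ => LinearMap.id) ∈ LinearMap.ker (ringelMap X X) :=
    mem_ker_ringelMap_iff.mpr fun _ => rfl
  have hid_ne : (fun _ => LinearMap.id : ∀ v, X.space v →ₗ[k] X.space v) ≠ 0 := fun h =>
    let ⟨x, hx⟩ := exists_ne (0 : X.space v₀)
    hx (LinearMap.congr_fun (congr_fun h v₀) x)
  have : Nontrivial (LinearMap.ker (ringelMap X X)) :=
    ⟨⟨⟨_, hid⟩, 0, fun h => hid_ne (congrArg Subtype.val h)⟩⟩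
  have hpos : 0 < Module.finrank k (LinearMap.ker (ringelMap X Y)) :=
    Module.finrank_pos.trans_le (finrank_ker_ringelMap_le hsurj hdim)
  have := Module.finrank_pos_iff.mp hpos
  obtain ⟨⟨f, hf⟩, hf_ne⟩ := exists_ne (0 : LinearMap.ker (ringelMap X Y))
  exact ⟨f, mem_ker_ringelMap_iff.mp hf, fun h => hf_ne (Subtype.ext h)⟩

theorem injective_of_isQHom_pow {X : QRep k V A s t}
    (hbrick : ∀ f, IsQHom k X X f → ∃ c : k, ∀ v, f v = c • LinearMap.id) {n : ℕ}
    {g : ∀ v, X.space v →ₗ[k] (Fin n → X.space v)} (hg : IsQHom k X (X.pow k n) g)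
    (hg_ne : g ≠ 0) (v : V) : Function.Injective (g v) := by
  choose c hc using fun j : Fin n => hbrick _ ((isQHom_proj X j).comp hg)
  have hgc : ∀ v x j, g v x j = c j • x := fun w y i => LinearMap.congr_fun (hc i w) y
  obtain ⟨w, x, j, hx⟩ : ∃ w x j, g w x j ≠ 0 := by
    by_contra! h
    exact hg_ne (funext fun w => LinearMap.ext fun x => funext (h w x))
  have hcj : c j ≠ 0 := by
    rintro h
    rw [hgc, h, zero_smul] at hx
    exact hx rfl
  refine (injective_iff_map_eq_zero _).mpr fun y hy => ?_
  simpa [hgc, hcj] using congr_fun hy j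

theorem exists_isQHom_sub_pow_injective [Fintype V] [Fintype A] {X : QRep k V A s t}
    [∀ v, FiniteDimensional k (X.space v)]
    (hbrick : ∀ f, IsQHom k X X f → ∃ c : k, ∀ v, f v = c • LinearMap.id)
    (hsurj : Function.Surjective (ringelMap X X)) {n : ℕ}
    (W : ∀ v, Submodule k (Fin n → X.space v))
    (hW : ∀ a, ∀ x ∈ W (s a), (X.pow k n).map a x ∈ W (t a))
    (hdim : ∀ v, Module.finrank k (W v) = Module.finrank k (X.space v)) :
    ∃ f, IsQHom k X ((X.pow k n).sub W hW) f ∧ ∀ v, Function.Injective (f v) := by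
  by_cases hX : ∀ v, Subsingleton (X.space v)
  · exact ⟨0, fun _ => by simp only [Pi.zero_apply, LinearMap.zero_comp, LinearMap.comp_zero],
      fun _ => Function.injective_of_subsingleton _⟩
  obtain ⟨v₀, hv₀⟩ : ∃ v, Nontrivial (X.space v) := by
    simpa only [not_forall, not_subsingleton_iff_nontrivial] using hX
  have : ∀ v, FiniteDimensional k (((X.pow k n).sub W hW).space v) := fun v =>
    inferInstanceAs (FiniteDimensional k (W v))
  obtain ⟨f, hf, hf_ne⟩ := exists_isQHom_ne_zero (Y := (X.pow k n).sub W hW) hsurj hdim hv₀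
  have hg := (isQHom_subtype (X.pow k n) W hW).comp hf
  have hg_ne : (fun v => (W v).subtype.comp (f v)) ≠ 0 := fun h => hf_ne <|
    funext fun v => LinearMap.ext fun x => Subtype.ext (LinearMap.congr_fun (congr_fun h v) x)
  exact ⟨f, hf, fun v =>
    Function.Injective.of_comp (f := Subtype.val) (injective_of_isQHom_pow hbrick hg hg_ne v)⟩

end QRep

theorem stmt4_general (k : Type) [Field k] {V A : Type} [Finite V] [Finite A]
    (s t : A → V)
    (X : QRep k V A s t) [∀ v, FiniteDimensional k (X.space v)]
    -- X is exceptional: End(X) = k ...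
    (hbrick : ∀ f, IsQHom k X X f → ∃ c : k, ∀ v, f v = c • LinearMap.id)
    -- ... and Ext¹(X,X) = 0, i.e. the standard map computing Ext¹ is surjective
    (hext : ∀ h : ∀ a : A, X.space (s a) →ₗ[k] X.space (t a),
      ∃ f : ∀ v, X.space v →ₗ[k] X.space v,
        ∀ a, h a = ((f (t a)).comp (X.map a)) - ((X.map a).comp (f (s a))))
    (n : ℕ)
    -- W is a subrepresentation of X^n with the same dimension vector as X
    (W : ∀ v, Submodule k (Fin n → X.space v))
    (hW : ∀ a : A, ∀ x ∈ W (s a), (QRep.pow k X n).map a x ∈ W (t a))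
    (hdim : ∀ v, Module.finrank k (W v) = Module.finrank k (X.space v)) :
    -- W ≅ X
    ∃ e : ∀ v, W v ≃ₗ[k] X.space v,
      ∀ (a : A) (x : W (s a)),
        e (t a) ⟨(QRep.pow k X n).map a x.1, hW a x.1 x.2⟩ = X.map a (e (s a) x) := by
  cases nonempty_fintype V
  cases nonempty_fintype A
  have hsurj : Function.Surjective (X.ringelMap X) := fun h =>
    let ⟨f, hf⟩ := hext h
    ⟨f, funext fun a => (hf a).symm⟩
  obtain ⟨f, hf, hinj⟩ := QRep.exists_isQHom_sub_pow_injective hbrick hsurj W hW hdim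
  let e v : X.space v ≃ₗ[k] W v := LinearMap.linearEquivOfInjective (f v) (hinj v) (hdim v).symm
  exact ⟨fun v => (e v).symm, IsQHom.symm_apply_map (Y := (X.pow k n).sub W hW) (e := e) hf⟩

theorem stmt4 (k : Type) [Field k] {V A : Type} [Finite V] [Finite A]
    (s t : A → V) (hacyclic : NoCycle s t)
    (X : QRep k V A s t) [∀ v, FiniteDimensional k (X.space v)]
    -- X is exceptional: End(X) = k ...
    (hbrick : ∀ f, IsQHom k X X f → ∃ c : k, ∀ v, f v = c • LinearMap.id)
    -- ... and Ext¹(X,X) = 0, i.e. the standard map computing Ext¹ is surjective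
    (hext : ∀ h : ∀ a : A, X.space (s a) →ₗ[k] X.space (t a),
      ∃ f : ∀ v, X.space v →ₗ[k] X.space v,
        ∀ a, h a = ((f (t a)).comp (X.map a)) - ((X.map a).comp (f (s a))))
    (n : ℕ)
    -- W is a subrepresentation of X^n with the same dimension vector as X
    (W : ∀ v, Submodule k (Fin n → X.space v))
    (hW : ∀ a : A, ∀ x ∈ W (s a), (QRep.pow k X n).map a x ∈ W (t a))
    (hdim : ∀ v, Module.finrank k (W v) = Module.finrank k (X.space v)) :
    -- W ≅ X
    ∃ e : ∀ v, W v ≃ₗ[k] X.space v,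
      ∀ (a : A) (x : W (s a)),
        e (t a) ⟨(QRep.pow k X n).map a x.1, hW a x.1 x.2⟩ = X.map a (e (s a) x) :=
  stmt4_general k s t X hbrick hext n W hW hdim
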